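/- arXiv:2502.04652 — 3 statements merged into one kernel-verified Lean document; each statement's English description precedes it below -/
import Mathlib

section
/- Let Â = A + εB be a dual real n×n matrix, with index of A equal to m. If both the dual Drazin inverse Â^D and the dual core-EP inverse Â^⊕ exist, then the dual Moore–Penrose inverse (Â^m)^† of Â^m exists and Â^⊕ = Â^D · Â^m · (Â^m)^†. -/
open Matrix

abbrev Mat (n : ℕ) := Matrix (Fin n) (Fin n) ℝ

/-- A dual matrix `A + ε B` represented as the pair `(A, B)`. -/
abbrev DM (n : ℕ) := Mat n × Mat n

/-- Dual matrix multiplication: `(A+εB)(C+εD) = AC + ε(AD+BC)`. -/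
def dmul {n : ℕ} (X Y : DM n) : DM n := (X.1 * Y.1, X.1 * Y.2 + X.2 * Y.1)

/-- Componentwise transpose of a dual matrix. -/
def dT {n : ℕ} (X : DM n) : DM n := (X.1ᵀ, X.2ᵀ)

/-- Powers of a dual matrix. -/
def dpow {n : ℕ} (X : DM n) : ℕ → DM n
  | 0 => (1, 0)
  | k+1 => dmul X (dpow X k)

/-- `m` is the index of `A`: the least `m` with `rank (A^(m+1)) = rank (A^m)`. -/
def MatIndex {n : ℕ} (A : Mat n) (m : ℕ) : Prop :=
  (A ^ (m+1)).rank = (A ^ m).rank ∧ ∀ k < m, (A ^ (k+1)).rank ≠ (A ^ k).rank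

/-- `X` is the core-EP inverse of `A` (with `m` the index of `A`). -/
def IsCEP {n : ℕ} (m : ℕ) (A X : Mat n) : Prop :=
  (A * X)ᵀ = A * X ∧ A * (X * X) = X ∧ X * A ^ (m+1) = A ^ m

/-- `Xh` is a dual core-EP inverse of the dual matrix `Ah`. -/
def IsDualCEP {n : ℕ} (m : ℕ) (Ah Xh : DM n) : Prop :=
  dT (dmul Ah Xh) = dmul Ah Xh ∧ dmul Ah (dmul Xh Xh) = Xh ∧
    dmul Xh (dpow Ah (m+1)) = dpow Ah m

/-- `Xh` is a dual Drazin inverse of the dual matrix `Ah`. -/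
def IsDualDrazin {n : ℕ} (m : ℕ) (Ah Xh : DM n) : Prop :=
  dmul Xh (dpow Ah (m+1)) = dpow Ah m ∧ dmul (dmul Xh Ah) Xh = Xh ∧
    dmul Ah Xh = dmul Xh Ah

/-- `Xh` is a dual Moore-Penrose inverse of the dual matrix `Mh`. -/
def IsDualMP {n : ℕ} (Mh Xh : DM n) : Prop :=
  dmul (dmul Mh Xh) Mh = Mh ∧ dmul (dmul Xh Mh) Xh = Xh ∧
    dT (dmul Mh Xh) = dmul Mh Xh ∧ dT (dmul Xh Mh) = dmul Xh Mh

/-!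
Drazin's equations make `Â^m` regular in the ring of dual matrices: `Â^m D̂^m Â^m = Â^m`.
For a regular dual number `M + εN` and a Moore–Penrose inverse `G` of `M`, the sandwich
`(1 - MG) N (1 - GM)` vanishes, and this is exactly what makes
`G + ε(-GNG + GGᵀNᵀ(1 - MG) + (1 - GM)NᵀGᵀG)` a Moore–Penrose inverse of `M + εN`; real
matrices have Moore–Penrose inverses `G = (MᵀM)⁺Mᵀ`, with `(MᵀM)⁺` obtained by inverting the
nonzero eigenvalues. Given `P = (Â^m)^†`, the element `D̂ Â^m P` satisfies the three core-EP
equations, and core-EP inverses are unique in any ring with involution.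
-/

section Monoid

variable {R : Type*} [Monoid R]

def IsDrazinInverse (m : ℕ) (a x : R) : Prop :=
  x * a ^ (m + 1) = a ^ m ∧ x * a * x = x ∧ Commute a x

theorem IsDrazinInverse.pow_mul_pow_mul_pow {m : ℕ} {a x : R} (h : IsDrazinInverse m a x) :
    a ^ m * x ^ m * a ^ m = a ^ m := by
  obtain ⟨hpow, hxax, hcomm⟩ := h
  cases m with
  | zero => simp
  | succ k =>
    have hidem : IsIdempotentElem (a * x) := by
      rw [IsIdempotentElem, mul_assoc, ← mul_assoc x, hxax]
    calc a ^ (k + 1) * x ^ (k + 1) * a ^ (k + 1) = (a * x) ^ (k + 1) * a ^ (k + 1) := by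
          rw [hcomm.mul_pow]
      _ = x * a ^ (k + 1 + 1) := by rw [hidem.pow_succ_eq, hcomm.eq, mul_assoc, ← pow_succ']
      _ = a ^ (k + 1) := hpow

theorem pow_mul_pow_succ_of_mul_mul_self {a x : R} (h : a * (x * x) = x) (k : ℕ) :
    a ^ k * x ^ (k + 1) = x := by
  induction k with
  | zero => simp
  | succ k ih =>
    calc a ^ (k + 1) * x ^ (k + 1 + 1) = a ^ k * (a * (x * x) * x ^ k) := by
          rw [pow_succ, pow_succ', pow_succ']; simp only [mul_assoc]
      _ = x := by rw [h, ← pow_succ', ih]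

theorem mul_mul_eq_of_mul_pow_succ {m : ℕ} {a x y : R} (hx : x * a ^ (m + 1) = a ^ m)
    (hy : a * (y * y) = y) : x * (a * y) = y :=
  calc x * (a * y) = x * a ^ (m + 1) * y ^ (m + 1) := by
        rw [mul_assoc, pow_succ', mul_assoc, pow_mul_pow_succ_of_mul_mul_self hy]
    _ = y := by rw [hx, pow_mul_pow_succ_of_mul_mul_self hy]

end Monoid

def IsMPInverse {R : Type*} [Mul R] [Star R] (a x : R) : Prop :=
  a * x * a = a ∧ x * a * x = x ∧ IsSelfAdjoint (a * x) ∧ IsSelfAdjoint (x * a)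

def IsCoreEPInverse {R : Type*} [Monoid R] [Star R] (m : ℕ) (a x : R) : Prop :=
  IsSelfAdjoint (a * x) ∧ a * (x * x) = x ∧ x * a ^ (m + 1) = a ^ m

section StarMonoid

variable {R : Type*} [Monoid R] [StarMul R]

theorem IsCoreEPInverse.eq {m : ℕ} {a x y : R} (hx : IsCoreEPInverse m a x)
    (hy : IsCoreEPInverse m a y) : x = y := by
  have hyx : y * (a * x) = x := mul_mul_eq_of_mul_pow_succ hy.2.2 hx.2.1
  have hxy : x * (a * y) = y := mul_mul_eq_of_mul_pow_succ hx.2.2 hy.2.1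
  have hxx : a * y * (a * x) = a * x := by rw [mul_assoc, hyx]
  have hyy : a * x * (a * y) = a * y := by rw [mul_assoc, hxy]
  -- self-adjoint idempotents that absorb each other coincide
  have hp : a * x = a * y :=
    calc a * x = star (a * y * (a * x)) := by rw [hxx, hx.1.star_eq]
      _ = a * y := by rw [star_mul, hx.1.star_eq, hy.1.star_eq, hyy]
  have hidem : a * y * (a * y) = a * y := by nth_rw 1 [← hp]; exact hyy
  calc x = y * (a * y) := by rw [← hp, hyx]
    _ = x * (a * y) * (a * y) := by rw [hxy]
    _ = y := by rw [mul_assoc, hidem, hxy]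

theorem isCoreEPInverse_mul_pow_mul {m : ℕ} {a d p : R} (hd : d * a ^ (m + 1) = a ^ m)
    (hcomm : Commute a d) (hp : a ^ m * p * a ^ m = a ^ m) (hsa : IsSelfAdjoint (a ^ m * p)) :
    IsCoreEPInverse m a (d * (a ^ m * p)) := by
  have hax : a * (d * (a ^ m * p)) = a ^ m * p :=
    calc a * (d * (a ^ m * p)) = d * a ^ (m + 1) * p := by
          rw [← mul_assoc, hcomm.eq, pow_succ']; simp only [mul_assoc]
      _ = a ^ m * p := by rw [hd]
  have hdm : d * a ^ m = a ^ m * d := (hcomm.pow_left m).eq.symm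
  refine ⟨by rw [hax]; exact hsa, ?_, ?_⟩
  · calc a * (d * (a ^ m * p) * (d * (a ^ m * p))) = a ^ m * p * (d * (a ^ m * p)) := by
          rw [← mul_assoc, hax]
      _ = a ^ m * p * a ^ m * d * p := by rw [← mul_assoc d, hdm]; simp only [mul_assoc]
      _ = d * (a ^ m * p) := by rw [hp, ← hdm, mul_assoc]
  · calc d * (a ^ m * p) * a ^ (m + 1) = d * (a ^ m * p * a ^ m * a) := by
          rw [pow_succ]; simp only [mul_assoc]
      _ = a ^ m := by rw [hp, ← pow_succ, hd]

end StarMonoid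

theorem isMPInverse_mul_star {R : Type*} [Ring R] [StarRing R]
    (hR : ∀ z : R, star z * z = 0 → z = 0) {a t : R}
    (hsts : star a * a * t * (star a * a) = star a * a) (htst : t * (star a * a) * t = t)
    (hc : Commute (star a * a) t) (ht : IsSelfAdjoint t) : IsMPInverse a (t * star a) := by
  have hsa : IsSelfAdjoint (star a * a) := .star_mul_self a
  generalize hs : star a * a = s at hsts htst hc hsa
  have hts : star (t * s) = t * s := by rw [star_mul, ht.star_eq, hsa.star_eq, hc.eq]
  have hats : a * (t * s) = a := by
    refine sub_eq_zero.1 (hR _ ?_)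
    calc star (a * (t * s) - a) * (a * (t * s) - a)
        = t * s * (star a * a) * (t * s) - t * s * (star a * a) - star a * a * (t * s)
          + star a * a := by rw [star_sub, star_mul, hts]; noncomm_ring
      _ = t * s * (s * t * s) - t * s * s - s * t * s + s := by rw [hs]; noncomm_ring
      _ = 0 := by rw [hsts]; noncomm_ring
  refine ⟨?_, ?_, ?_, ?_⟩
  · calc a * (t * star a) * a = a * (t * (star a * a)) := by simp only [mul_assoc]
      _ = a := by rw [hs, hats]
  · calc t * star a * a * (t * star a) = t * (star a * a) * t * star a := by simp only [mul_assoc]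
      _ = t * star a := by rw [hs, htst]
  · rw [IsSelfAdjoint, star_mul, star_mul, star_star, ht.star_eq, mul_assoc]
  · rw [IsSelfAdjoint, mul_assoc, hs, hts]

theorem IsSelfAdjoint.exists_groupInverse {A : Type*} [TopologicalSpace A] [Ring A] [StarRing A]
    [Algebra ℝ A] [ContinuousFunctionalCalculus ℝ A IsSelfAdjoint] {s : A} (hs : IsSelfAdjoint s)
    (hinv : ContinuousOn (·⁻¹) (spectrum ℝ s)) :
    ∃ t, s * t * s = s ∧ t * s * t = t ∧ Commute s t ∧ IsSelfAdjoint t := by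
  -- since `0⁻¹ = 0`, `cfc (·⁻¹) s` inverts `s` on the nonzero part of its spectrum only
  refine ⟨cfc (·⁻¹ : ℝ → ℝ) s, ?_, ?_, ?_, IsSelfAdjoint.cfc⟩
  · calc s * cfc (·⁻¹) s * s = cfc (fun x : ℝ => x * x⁻¹ * x) s := by
          rw [cfc_mul _ _ s, cfc_mul _ _ s, cfc_id' ℝ s]
      _ = s := by simp only [mul_inv_mul_cancel, cfc_id' ℝ s]
  · calc cfc (·⁻¹) s * s * cfc (·⁻¹) s = cfc (fun x : ℝ => x⁻¹ * x * x⁻¹) s := by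
          rw [cfc_mul _ _ s, cfc_mul _ _ s, cfc_id' ℝ s]
      _ = cfc (·⁻¹) s := cfc_congr fun x _ => by simpa using mul_inv_mul_cancel x⁻¹
  · simpa only [cfc_id' ℝ s] using cfc_commute_cfc (fun x : ℝ => x) (·⁻¹) s

open scoped ComplexOrder in
theorem Matrix.exists_isMPInverse {ι 𝕜 : Type*} [Fintype ι] [DecidableEq ι] [RCLike 𝕜]
    (M : Matrix ι ι 𝕜) : ∃ G, IsMPInverse M G := by
  obtain ⟨t, hsts, htst, hc, ht⟩ := (IsSelfAdjoint.star_mul_self M).exists_groupInverse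
    ((Mᴴ * M).finite_real_spectrum.continuousOn _)
  exact ⟨t * star M,
    isMPInverse_mul_star (fun _ => conjTranspose_mul_self_eq_zero.1) hsts htst hc ht⟩

namespace TrivSqZeroExt

variable {R M : Type*}

instance [Star R] [Star M] : Star (TrivSqZeroExt R M) := ⟨fun x => (star x.fst, star x.snd)⟩

@[simp]
theorem fst_star [Star R] [Star M] (x : TrivSqZeroExt R M) : (star x).fst = star x.fst := rfl

@[simp]
theorem snd_star [Star R] [Star M] (x : TrivSqZeroExt R M) : (star x).snd = star x.snd := rfl

theorem isSelfAdjoint_iff [Star R] [Star M] {x : TrivSqZeroExt R M} :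
    IsSelfAdjoint x ↔ IsSelfAdjoint x.fst ∧ IsSelfAdjoint x.snd :=
  TrivSqZeroExt.ext_iff

instance [Ring R] [StarRing R] : StarRing (DualNumber R) where
  star_involutive x := ext (star_star x.fst) (star_star x.snd)
  star_mul x y := ext (star_mul x.fst y.fst) <| by
    simp only [snd_star, snd_mul, fst_star, smul_eq_mul, op_smul_eq_mul, star_add, star_mul,
      add_comm]
  star_add x y := ext (star_add x.fst y.fst) (star_add x.snd y.snd)

variable [Ring R]

theorem one_sub_mul_snd_mul_one_sub_eq_zero {c h : DualNumber R} (hc : c * h * c = c) {g : R}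
    (hg : c.fst * g * c.fst = c.fst) : (1 - c.fst * g) * c.snd * (1 - g * c.fst) = 0 := by
  have hsnd : c.fst * h.fst * c.snd + (c.fst * h.snd + c.snd * h.fst) * c.fst = c.snd := by
    simpa only [snd_mul, fst_mul, smul_eq_mul, op_smul_eq_mul] using congrArg snd hc
  generalize c.fst = M, c.snd = N at hsnd hg ⊢
  have hl : (1 - M * g) * M = 0 := by rw [sub_mul, one_mul, hg, sub_self]
  have hr : M * (1 - g * M) = 0 := by rw [mul_sub, mul_one, ← mul_assoc, hg, sub_self]
  calc (1 - M * g) * N * (1 - g * M)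
      = (1 - M * g) * M * (h.fst * N * (1 - g * M) + h.snd * (M * (1 - g * M)))
        + (1 - M * g) * N * h.fst * (M * (1 - g * M)) := by nth_rw 1 [← hsnd]; noncomm_ring
    _ = 0 := by rw [hl, hr]; noncomm_ring

variable [StarRing R]

theorem exists_isMPInverse_of_one_sub_mul_snd_mul_one_sub_eq_zero {c : DualNumber R} {g : R}
    (hg : IsMPInverse c.fst g) (hN : (1 - c.fst * g) * c.snd * (1 - g * c.fst) = 0) :
    ∃ x, IsMPInverse c x := by
  obtain ⟨x, hxg, hxe⟩ : ∃ x : DualNumber R, x.fst = g ∧ x.snd =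
      -(g * c.snd * g) + g * star g * star c.snd * (1 - c.fst * g)
        + (1 - g * c.fst) * star c.snd * star g * g := ⟨(_, _), rfl, rfl⟩
  refine ⟨x, ?_⟩
  simp only [IsMPInverse, TrivSqZeroExt.ext_iff, isSelfAdjoint_iff, snd_mul, fst_mul, smul_eq_mul,
    op_smul_eq_mul, hxg] at hg ⊢
  generalize c.fst = M, c.snd = N, x.snd = e at *
  obtain ⟨hMgM, hgMg, hMg, hgM⟩ := hg
  have hl : (1 - M * g) * M = 0 := by rw [sub_mul, one_mul, hMgM, sub_self]
  have hr : M * (1 - g * M) = 0 := by rw [mul_sub, mul_one, ← mul_assoc, hMgM, sub_self]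
  have hgl : M * g * star g = star g := by rw [← hMg.star_eq, ← star_mul, ← mul_assoc, hgMg]
  have hgr : star g * g * M = star g := by rw [mul_assoc, ← hgM.star_eq, ← star_mul, hgMg]
  have hMe : M * e = -(M * g * N * g) + star g * star N * (1 - M * g) :=
    calc M * e = -(M * g * N * g) + M * g * star g * star N * (1 - M * g)
          + M * (1 - g * M) * (star N * star g * g) := by rw [hxe]; noncomm_ring
      _ = _ := by rw [hgl, hr]; noncomm_ring
  have heM : e * M = -(g * N * g * M) + (1 - g * M) * star N * star g :=
    calc e * M = -(g * N * g * M) + g * star g * star N * ((1 - M * g) * M)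
          + (1 - g * M) * star N * (star g * g * M) := by rw [hxe]; noncomm_ring
      _ = _ := by rw [hgr, hl]; noncomm_ring
  refine ⟨⟨hMgM, ?_⟩, ⟨hgMg, ?_⟩, ⟨hMg, ?_⟩, ⟨hgM, ?_⟩⟩
  · calc M * g * N + (M * e + N * g) * M
        = N - (1 - M * g) * N * (1 - g * M) + star g * star N * ((1 - M * g) * M) := by
          rw [hMe]; noncomm_ring
      _ = N := by rw [hN, hl]; noncomm_ring
  · calc g * M * e + (g * N + e * M) * g = g * (M * e) + g * N * g + e * M * g := by noncomm_ring
      _ = -(g * M * g * N * g) + g * star g * star N * (1 - M * g) + g * N * g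
          - g * N * (g * M * g) + (1 - g * M) * star N * star g * g := by
          rw [hMe, heM]; noncomm_ring
      _ = e := by rw [hgMg, hxe]; noncomm_ring
  · have : M * e + N * g = (1 - M * g) * N * g + star ((1 - M * g) * N * g) := by
      rw [hMe, star_mul, star_mul, star_sub, star_one, hMg.star_eq]; noncomm_ring
    rw [this]
    exact .add_star_self _
  · have : g * N + e * M = g * N * (1 - g * M) + star (g * N * (1 - g * M)) := by
      rw [heM, star_mul, star_mul, star_sub, star_one, hgM.star_eq]; noncomm_ring
    rw [this]
    exact .add_star_self _

theorem exists_isMPInverse_of_mul_mul_eq_self {c h : DualNumber R} (hc : c * h * c = c) {g : R}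
    (hg : IsMPInverse c.fst g) : ∃ x, IsMPInverse c x :=
  exists_isMPInverse_of_one_sub_mul_snd_mul_one_sub_eq_zero hg
    (one_sub_mul_snd_mul_one_sub_eq_zero hc hg.1)

end TrivSqZeroExt

namespace DM

variable {n : ℕ}

def toDualNumber : DM n ≃ DualNumber (Mat n) := Equiv.refl _

theorem toDualNumber_dmul (X Y : DM n) :
    toDualNumber (dmul X Y) = toDualNumber X * toDualNumber Y := rfl

theorem toDualNumber_dT (X : DM n) : toDualNumber (dT X) = star (toDualNumber X) :=
  TrivSqZeroExt.ext (conjTranspose_eq_transpose_of_trivial X.1).symm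
    (conjTranspose_eq_transpose_of_trivial X.2).symm

theorem toDualNumber_dpow (X : DM n) (k : ℕ) : toDualNumber (dpow X k) = toDualNumber X ^ k := by
  induction k with
  | zero => rfl
  | succ k ih => rw [pow_succ', ← ih, ← toDualNumber_dmul]; rfl

theorem isDualMP_iff {Mh Xh : DM n} :
    IsDualMP Mh Xh ↔ IsMPInverse (toDualNumber Mh) (toDualNumber Xh) := by
  simp only [IsDualMP, IsMPInverse, IsSelfAdjoint, ← toDualNumber_dmul, ← toDualNumber_dT,
    toDualNumber.apply_eq_iff_eq]

theorem isDualCEP_iff {m : ℕ} {Ah Xh : DM n} :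
    IsDualCEP m Ah Xh ↔ IsCoreEPInverse m (toDualNumber Ah) (toDualNumber Xh) := by
  simp only [IsDualCEP, IsCoreEPInverse, IsSelfAdjoint, ← toDualNumber_dmul, ← toDualNumber_dT,
    ← toDualNumber_dpow, toDualNumber.apply_eq_iff_eq]

theorem isDualDrazin_iff {m : ℕ} {Ah Xh : DM n} :
    IsDualDrazin m Ah Xh ↔ IsDrazinInverse m (toDualNumber Ah) (toDualNumber Xh) := by
  simp only [IsDualDrazin, IsDrazinInverse, Commute, SemiconjBy, ← toDualNumber_dmul,
    ← toDualNumber_dpow, toDualNumber.apply_eq_iff_eq]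

end DM

theorem stmt8_general {n m : ℕ} (A B : Mat n)
    (Dh Ch : DM n)
    (hD : IsDualDrazin m (A, B) Dh) (hC : IsDualCEP m (A, B) Ch) :
    (∃ Ph : DM n, IsDualMP (dpow (A, B) m) Ph) ∧
      ∀ Ph : DM n, IsDualMP (dpow (A, B) m) Ph →
        Ch = dmul Dh (dmul (dpow (A, B) m) Ph) := by
  rw [DM.isDualDrazin_iff] at hD
  rw [DM.isDualCEP_iff] at hC
  simp only [DM.isDualMP_iff, DM.toDualNumber_dpow]
  refine ⟨?_, fun Ph hP => DM.toDualNumber.injective ?_⟩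
  · obtain ⟨g, hg⟩ := Matrix.exists_isMPInverse (DM.toDualNumber (A, B) ^ m).fst
    obtain ⟨x, hx⟩ := TrivSqZeroExt.exists_isMPInverse_of_mul_mul_eq_self
      hD.pow_mul_pow_mul_pow hg
    exact ⟨DM.toDualNumber.symm x, by rwa [Equiv.apply_symm_apply]⟩
  · rw [DM.toDualNumber_dmul, DM.toDualNumber_dmul, DM.toDualNumber_dpow]
    exact hC.eq (isCoreEPInverse_mul_pow_mul hD.1 hD.2.2 hP.1 hP.2.2.1)

theorem stmt8 {n m : ℕ} (A B : Mat n) (hm : MatIndex A m)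
    (Dh Ch : DM n)
    (hD : IsDualDrazin m (A, B) Dh) (hC : IsDualCEP m (A, B) Ch) :
    (∃ Ph : DM n, IsDualMP (dpow (A, B) m) Ph) ∧
      ∀ Ph : DM n, IsDualMP (dpow (A, B) m) Ph →
        Ch = dmul Dh (dmul (dpow (A, B) m) Ph) :=
  stmt8_general A B Dh Ch hD hC
end

section
/- Let Â = A + εB be a dual real n×n matrix with index of A equal to m. If the dual Drazin inverse of Â exists and equals A^D − ε A^D B A^D, then the dual core-EP inverse of Â exists and equals A^⊕ − ε A^⊕ B A^⊕. -/
open Matrix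

/-- `X` is the Drazin inverse of `A` (with `m` the index of `A`). -/
def IsDrazin {n : ℕ} (m : ℕ) (A X : Mat n) : Prop :=
  X * A ^ (m+1) = A ^ m ∧ X * A * X = X ∧ A * X = X * A

/-!
Write `Â = (A, B)`, `D = A^D`, `C = A^⊕` and `S` for the `ε`-part of `Â^m`. The `ε`-part of
`(D, -DBD) Â^{m+1} = Â^m` says exactly that the spectral idempotent `AD` fixes `S`. Comparing the two
expansions `Â^{m+1} = Â Â^m = Â^m Â` then shows that `AD` also fixes `BA^m`. Since `AD = A^{m+1}D^{m+1}`
and both `AC` and `CA` fix the range of `A^{m+1}`, the projector `AC` fixes `BA^m`, hence also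
`BC = BA^m C^{m+1}`, and `CA` fixes `S`. The first makes `Â (C, -CBC) = (AC, 0)`, which is symmetric,
and the remaining identities follow.
-/

section Monoid

variable {M : Type*} [Monoid M] {m : ℕ} {A C D : M}

lemma mul_eq_pow_succ_mul_pow_succ (hDAD : D * A * D = D) (hAD : A * D = D * A) (k : ℕ) :
    A * D = A ^ (k + 1) * D ^ (k + 1) := by
  have hidem : IsIdempotentElem (A * D) := by
    rw [IsIdempotentElem, mul_assoc, ← mul_assoc D, hDAD]
  rw [← (Commute.mul_pow hAD (k + 1)), hidem.pow_succ_eq]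

lemma eq_pow_mul_pow_succ (hC : A * (C * C) = C) : ∀ k : ℕ, C = A ^ k * C ^ (k + 1)
  | 0 => by simp
  | k + 1 => by
    have hstep : A * C ^ (k + 2) = C ^ (k + 1) := by
      rw [pow_succ' C (k + 1), pow_succ' C k, ← mul_assoc C, ← mul_assoc, hC]
    rw [pow_succ, mul_assoc, hstep, ← eq_pow_mul_pow_succ hC k]

lemma mul_mul_eq_self_of_mul_mul_eq_self (hDAD : D * A * D = D) (hAD : A * D = D * A)
    (hC : C * A ^ (m + 1) = A ^ m) {Y : M} (hY : A * D * Y = Y) :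
    A * C * Y = Y ∧ C * A * Y = Y := by
  rw [← hY, mul_eq_pow_succ_mul_pow_succ hDAD hAD m]
  constructor
  · rw [← mul_assoc, ← mul_assoc, mul_assoc A, hC, ← pow_succ']
  · rw [← mul_assoc, ← mul_assoc, mul_assoc C, ← pow_succ', pow_succ, ← mul_assoc, hC, ← pow_succ]

end Monoid

lemma mul_mul_mul_pow_eq_self {R : Type*} [Ring R] {m : ℕ} {A B D S : R}
    (hD : D * A ^ (m + 1) = A ^ m) (hAD : A * D = D * A) (hS : D * A * S = S)
    (hcomm : A * S + B * A ^ m = S * A + A ^ m * B) :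
    A * D * (B * A ^ m) = B * A ^ m := by
  have hSA : A * D * (S * A) = S * A := by rw [← mul_assoc, hAD, hS]
  have hAS : A * D * (A * S) = A * S := by rw [mul_assoc, ← mul_assoc D, hS]
  have hAmB : A * D * (A ^ m * B) = A ^ m * B := by
    rw [← mul_assoc, hAD, mul_assoc D, ← pow_succ', hD]
  rw [eq_sub_of_add_eq' hcomm, mul_sub, mul_add, hSA, hAS, hAmB]

section Dual

variable {n : ℕ}

lemma dmul_assoc (X Y Z : DM n) : dmul (dmul X Y) Z = dmul X (dmul Y Z) := by
  simp only [dmul, Prod.mk.injEq, Matrix.mul_assoc, Matrix.mul_add, Matrix.add_mul, true_and]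
  abel

lemma dpow_fst (X : DM n) (k : ℕ) : (dpow X k).1 = X.1 ^ k := by
  induction k with
  | zero => rfl
  | succ k ih => simp [dpow, dmul, ih, pow_succ']

lemma dpow_succ' (X : DM n) (k : ℕ) : dpow X (k + 1) = dmul (dpow X k) X := by
  induction k with
  | zero => simp [dpow, dmul]
  | succ k ih =>
    change dmul X (dpow X (k + 1)) = dmul (dmul X (dpow X k)) X
    rw [ih, dmul_assoc]

lemma dpow_snd_commute (A B : Mat n) (k : ℕ) :
    A * (dpow (A, B) k).2 + B * A ^ k = (dpow (A, B) k).2 * A + A ^ k * B := by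
  have h := congrArg Prod.snd (dpow_succ' (A, B) k)
  simp only [dpow, dmul, dpow_fst] at h
  rw [h, add_comm]

lemma dmul_dpow_succ {m : ℕ} {A B X : Mat n} (hX : X * A ^ (m + 1) = A ^ m) :
    dmul (X, -(X * B * X)) (dpow (A, B) (m + 1)) = (A ^ m, X * A * (dpow (A, B) m).2) := by
  simp only [dpow, dmul, dpow_fst]
  rw [← pow_succ', hX, Matrix.mul_add, neg_mul, Matrix.mul_assoc (X * B), hX, ← Matrix.mul_assoc,
    Matrix.mul_assoc X B, add_neg_cancel_right]

lemma IsDualDrazin.isDrazin_fst {m : ℕ} {A B X Y : Mat n} (h : IsDualDrazin m (A, B) (X, Y)) :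
    IsDrazin m A X := by
  obtain ⟨h1, h2, h3⟩ := h
  refine ⟨?_, congrArg Prod.fst h2, congrArg Prod.fst h3⟩
  simpa [dmul, dpow_fst] using congrArg Prod.fst h1

end Dual

theorem stmt13_general {n m : ℕ} (A B : Mat n)
    (Ad : Mat n)
    (hdD : IsDualDrazin m (A, B) (Ad, -(Ad * B * Ad)))
    (Ac : Mat n) (hAc : IsCEP m A Ac) :
    IsDualCEP m (A, B) (Ac, -(Ac * B * Ac)) := by
  obtain ⟨hAd1, hAd2, hAd3⟩ := hdD.isDrazin_fst
  obtain ⟨hAc1, hAc2, hAc3⟩ := hAc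
  set S := (dpow (A, B) m).2
  have hS : Ad * A * S = S := by
    simpa [dmul_dpow_succ hAd1] using congrArg Prod.snd hdD.1
  have hSfix : A * Ad * S = S := by rw [hAd3]; exact hS
  have hBAm := mul_mul_mul_pow_eq_self hAd1 hAd3 hS (dpow_snd_commute A B m)
  have hBAc : A * Ac * (B * Ac) = B * Ac := by
    have hBAc_eq : B * Ac = B * A ^ m * Ac ^ (m + 1) := by
      rw [mul_assoc, ← eq_pow_mul_pow_succ hAc2]
    rw [hBAc_eq, ← mul_assoc, (mul_mul_eq_self_of_mul_mul_eq_self hAd2 hAd3 hAc3 hBAm).1]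
  have hAX : dmul (A, B) (Ac, -(Ac * B * Ac)) = (A * Ac, 0) := by
    simp only [dmul, Prod.mk.injEq, true_and, mul_neg, ← Matrix.mul_assoc]
    rw [Matrix.mul_assoc, hBAc, neg_add_cancel]
  refine ⟨?_, ?_, ?_⟩
  · simp [hAX, dT, hAc1]
  · have hACC : A * Ac * Ac = Ac := by rw [mul_assoc, hAc2]
    rw [← dmul_assoc, hAX]
    simp [dmul, ← Matrix.mul_assoc, hACC]
  · rw [dmul_dpow_succ hAc3, (mul_mul_eq_self_of_mul_mul_eq_self hAd2 hAd3 hAc3 hSfix).2]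
    exact Prod.ext (dpow_fst (A, B) m).symm rfl

theorem stmt13 {n m : ℕ} (A B : Mat n) (hm : MatIndex A m)
    (Ad : Mat n) (hAd : IsDrazin m A Ad)
    (hdD : IsDualDrazin m (A, B) (Ad, -(Ad * B * Ad)))
    (Ac : Mat n) (hAc : IsCEP m A Ac) :
    IsDualCEP m (A, B) (Ac, -(Ac * B * Ac)) :=
  stmt13_general A B Ad hdD Ac hAc
end

section
/- Let Â = A + εB be a dual real n×n matrix with index of A equal to m, such that the dual core-EP inverse exists and equals A^⊕ − ε A^⊕ B A^⊕. Then R(Â^m) ∩ N((Â^m)^T) = {0}, i.e., the only dual vector lying both in the dual range of Â^m and in the dual null space of the transpose of Â^m is the zero dual vector. -/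
open Matrix

/-- A dual vector `x + ε x₀` represented as the pair `(x, x₀)`. -/
abbrev DV (n : ℕ) := (Fin n → ℝ) × (Fin n → ℝ)

/-- Action of a dual matrix on a dual vector. -/
def dmulVec {n : ℕ} (M : DM n) (x : DV n) : DV n :=
  (M.1.mulVec x.1, M.1.mulVec x.2 + M.2.mulVec x.1)

/-- Dual range of a dual matrix. -/
def DRange {n : ℕ} (M : DM n) : Set (DV n) :=
  {y | ∃ z w : Fin n → ℝ, y = (M.1.mulVec z, M.1.mulVec w + M.2.mulVec z)}

/-- Dual null space of a dual matrix. -/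
def DNull {n : ℕ} (M : DM n) : Set (DV n) :=
  {y | M.1.mulVec y.1 = 0 ∧ M.1.mulVec y.2 + M.2.mulVec y.1 = 0}

/-! `P := Â X̂` is symmetric, fixes `Âᵐ` (`Â X̂ Âᵐ = (Â X̂ X̂) Âᵐ⁺¹ = X̂ Âᵐ⁺¹ = Âᵐ`) and factors
through it: `X̂ = Â X̂ X̂` gives `Â X̂ = Âᵏ Qₖ` for every `k`. So `P` is the orthogonal projector onto
`R(Âᵐ)`, and for `y = Âᵐ v` with `(Âᵐ)ᵀ y = 0` we get `y = P y = Pᵀ y = Qₘᵀ (Âᵐ)ᵀ y = 0`. The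
argument stays inside the algebra of dual matrices and never splits `Â` into real and dual parts. -/

section DualMatrix

variable {n : ℕ}

lemma one_dmul (X : DM n) : dmul (1, 0) X = X := by
  simp [dmul]

lemma dT_dmul (X Y : DM n) : dT (dmul X Y) = dmul (dT Y) (dT X) := by
  ext1 <;> simp only [dT, dmul, transpose_mul, transpose_add]
  exact add_comm _ _

lemma dmulVec_dmul (X Y : DM n) (v : DV n) :
    dmulVec (dmul X Y) v = dmulVec X (dmulVec Y v) := by
  ext1 <;> simp only [dmulVec, dmul, Matrix.add_mulVec, Matrix.mulVec_add, Matrix.mulVec_mulVec]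
  abel

lemma dmulVec_zero (X : DM n) : dmulVec X 0 = 0 := by
  simp [dmulVec]

lemma mem_DRange_iff {M : DM n} {y : DV n} : y ∈ DRange M ↔ ∃ v, dmulVec M v = y := by
  simp only [DRange, dmulVec, Set.mem_ofPred_eq, Prod.exists]
  exact ⟨fun ⟨z, w, h⟩ => ⟨z, w, h.symm⟩, fun ⟨z, w, h⟩ => ⟨z, w, h.symm⟩⟩

lemma mem_DNull_iff {M : DM n} {y : DV n} : y ∈ DNull M ↔ dmulVec M y = 0 := by
  simp [DNull, dmulVec, Prod.ext_iff]

lemma DRange_inter_DNull_dT_eq_zero {M P Q : DM n} (hP : dT P = P) (hPM : dmul P M = M)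
    (hMQ : dmul M Q = P) : DRange M ∩ DNull (dT M) = {0} := by
  refine Set.eq_singleton_iff_unique_mem.2 ⟨⟨mem_DRange_iff.2 ⟨0, dmulVec_zero M⟩,
    mem_DNull_iff.2 (dmulVec_zero _)⟩, ?_⟩
  rintro y ⟨hy, hy_null⟩
  obtain ⟨v, rfl⟩ := mem_DRange_iff.1 hy
  calc dmulVec M v = dmulVec (dT P) (dmulVec M v) := by
        rw [hP, ← dmulVec_dmul, hPM]
    _ = dmulVec (dT Q) (dmulVec (dT M) (dmulVec M v)) := by
        rw [← hMQ, dT_dmul, dmulVec_dmul]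
    _ = 0 := by rw [mem_DNull_iff.1 hy_null, dmulVec_zero]

end DualMatrix

namespace IsDualCEP

variable {n m : ℕ} {Ah Xh : DM n}

lemma dmul_dpow_index (h : IsDualCEP m Ah Xh) :
    dmul (dmul Ah Xh) (dpow Ah m) = dpow Ah m := by
  obtain ⟨-, hXX, hXA⟩ := h
  calc dmul (dmul Ah Xh) (dpow Ah m) = dmul (dmul Ah Xh) (dmul Xh (dpow Ah (m + 1))) := by
        rw [hXA]
    _ = dmul (dmul Ah (dmul Xh Xh)) (dpow Ah (m + 1)) := by
        simp only [dmul_assoc]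
    _ = dpow Ah m := by rw [hXX, hXA]

lemma exists_dpow_dmul_eq (h : IsDualCEP m Ah Xh) (k : ℕ) :
    ∃ Q, dmul (dpow Ah k) Q = dmul Ah Xh := by
  induction k with
  | zero => exact ⟨dmul Ah Xh, one_dmul _⟩
  | succ k ih =>
    obtain ⟨Q, hQ⟩ := ih
    refine ⟨dmul Q Xh, ?_⟩
    calc dmul (dpow Ah (k + 1)) (dmul Q Xh) = dmul Ah (dmul (dmul (dpow Ah k) Q) Xh) := by
          simp only [dpow, dmul_assoc]
      _ = dmul Ah Xh := by rw [hQ, dmul_assoc, h.2.1]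

theorem DRange_inter_DNull_dT_eq_zero (h : IsDualCEP m Ah Xh) :
    DRange (dpow Ah m) ∩ DNull (dT (dpow Ah m)) = {0} := by
  obtain ⟨Q, hQ⟩ := h.exists_dpow_dmul_eq m
  exact _root_.DRange_inter_DNull_dT_eq_zero h.1 h.dmul_dpow_index hQ

end IsDualCEP

theorem stmt15_general {n m : ℕ} (A B : Mat n)
    (Ac : Mat n)
    (hXh : IsDualCEP m (A, B) (Ac, -(Ac * B * Ac))) :
    DRange (dpow (A, B) m) ∩ DNull (dT (dpow (A, B) m)) = {0} :=
  hXh.DRange_inter_DNull_dT_eq_zero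

theorem stmt15 {n m : ℕ} (A B : Mat n) (hm : MatIndex A m)
    (Ac : Mat n) (hAc : IsCEP m A Ac)
    (hXh : IsDualCEP m (A, B) (Ac, -(Ac * B * Ac))) :
    DRange (dpow (A, B) m) ∩ DNull (dT (dpow (A, B) m)) = {0} :=
  stmt15_general A B Ac hXh
end
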